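/- Let ω₁, ω₂ be regular majorants, let i, j be orthogonal imaginary units, and let f be a slice regular function on D⁴ whose ℂ(i)-components f₁, f₂ on D_i satisfy ‖f_k(x) − f_k(y)‖ ≤ C_k·ω_k(‖x − y‖) for all x, y ∈ D_i, k = 1, 2. Then there exists C > 0 such that for all q ∈ D⁴, ‖f′(q)‖ ≤ C·(ω₁(1 − ‖q‖) + ω₂(1 − ‖q‖))/(1 − ‖q‖). -/

import Mathlib

noncomputable section

notation "ℍ" => Quaternion ℝ

def IsImaginaryUnit (i : ℍ) : Prop := i.re = 0 ∧ ‖i‖ = 1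

def OrthogonalUnits (i j : ℍ) : Prop :=
  IsImaginaryUnit i ∧ IsImaginaryUnit j ∧ (i * star j).re = 0

def qslice (i : ℍ) : Set ℍ := {z | ∃ x y : ℝ, z = (x : ℍ) + y • i}

def sliceDisc (i : ℍ) : Set ℍ := {z ∈ qslice i | ‖z‖ < 1}

def sliceCircle (i : ℍ) : Set ℍ := {z ∈ qslice i | ‖z‖ = 1}

def unitBall : Set ℍ := {q : ℍ | ‖q‖ < 1}

structure IsMajorant (ω : ℝ → ℝ) : Prop where
  contOn : ContinuousOn ω (Set.Icc 0 2)
  map_zero : ω 0 = 0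
  nonneg : ∀ t ∈ Set.Icc (0:ℝ) 2, 0 ≤ ω t
  mono : MonotoneOn ω (Set.Icc 0 2)
  div_anti : AntitoneOn (fun t => ω t / t) (Set.Ioc 0 2)

def IsRegularMajorant (ω : ℝ → ℝ) : Prop :=
  IsMajorant ω ∧ ∃ C > 0, ∀ x : ℝ, 0 < x → x < 2 →
    (∫ t in (0:ℝ)..x, ω t / t) + x * (∫ t in x..(2:ℝ), ω t / t ^ 2) ≤ C * ω x

def SliceRegularOn (f : ℍ → ℍ) (a : ℕ → ℍ) : Prop :=
  (∀ r : ℝ, 0 ≤ r → r < 1 → Summable (fun n => ‖a n‖ * r ^ n)) ∧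
  (∀ q ∈ unitBall, HasSum (fun n => q ^ n * a n) (f q))

def IsSliceRegular (f : ℍ → ℍ) : Prop := ∃ a : ℕ → ℍ, SliceRegularOn f a

def SliceDeriv (f f' : ℍ → ℍ) (a : ℕ → ℍ) : Prop :=
  SliceRegularOn f a ∧
  (∀ q ∈ unitBall, HasSum (fun n => ((n + 1 : ℕ) : ℝ) • (q ^ n * a (n + 1))) (f' q))

def expI (i : ℍ) (t : ℝ) : ℍ := (Real.cos t : ℍ) + Real.sin t • i

def poisson (i : ℍ) (u : ℍ → ℝ) (q : ℍ) : ℝ :=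
  (1 / (2 * Real.pi)) * ∫ t in (0:ℝ)..(2 * Real.pi),
    u (expI i t) * (1 - ‖q‖ ^ 2) / ‖q - expI i t‖ ^ 2

def comp1 (i : ℍ) (f : ℍ → ℍ) : ℍ → ℍ := fun q => (2⁻¹ : ℝ) • (f q - i * f q * i)

def comp2 (i j : ℍ) (f : ℍ → ℍ) : ℍ → ℍ := fun q => ((2⁻¹ : ℝ) • (f q + i * f q * i)) * j⁻¹

/-
On the slice `ℂ(i)` the components give `f` the modulus of continuity `C₁ ω₁ + C₂ ω₂`.
Integrating `e^{-it} (f(w + ρ e^{it}) - f(w))` termwise over the power series gives Cauchy's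
formula `2πρ f'(w)`, hence `‖f'(w)‖ ≤ (C₁ ω₁(ρ) + C₂ ω₂(ρ)) / ρ` with `ρ = (1 - ‖w‖) / 2`.
Every `q` is `x + y I` for some imaginary unit `I`, and
`x + y I = ½ (1 - I i) (x + y i) + ½ (1 + I i) (x - y i)`; applied to the powers in the series of
`f'` this transfers the bound from `ℂ(i)` to the whole ball at the cost of a factor `2`, and the
monotonicity of the majorants turns `ω_k((1 - ‖q‖) / 2)` into `ω_k(1 - ‖q‖)`.
-/

open MeasureTheory Complex ComplexConjugate Real

namespace IsImaginaryUnit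

variable {i : ℍ}

lemma star_eq_neg (hi : IsImaginaryUnit i) : star i = -i := by
  ext <;> simp [hi.1]

lemma mul_self (hi : IsImaginaryUnit i) : i * i = -1 := by
  have h := Quaternion.self_mul_star i
  rwa [hi.star_eq_neg, mul_neg, Quaternion.normSq_eq_norm_mul_self, hi.2, mul_one,
    Quaternion.coe_one, neg_eq_iff_eq_neg] at h

end IsImaginaryUnit

def sliceEmbedding {i : ℍ} (hi : IsImaginaryUnit i) : ℂ →ₐ[ℝ] ℍ :=
  Complex.liftAux i hi.mul_self

section sliceEmbedding

variable {i : ℍ} (hi : IsImaginaryUnit i)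

lemma sliceEmbedding_apply (z : ℂ) : sliceEmbedding hi z = (z.re : ℍ) + z.im • i := by
  simp [sliceEmbedding, Complex.liftAux_apply]

lemma norm_sliceEmbedding (z : ℂ) : ‖sliceEmbedding hi z‖ = ‖z‖ := by
  have hre : ((z.re : ℍ) * star (z.im • i)).re = 0 := by simp [hi.star_eq_neg, hi.1]
  have h : ‖sliceEmbedding hi z‖ ^ 2 = ‖z‖ ^ 2 := by
    rw [sq, ← Quaternion.normSq_eq_norm_mul_self, ← Complex.normSq_eq_norm_sq,
      sliceEmbedding_apply, Quaternion.normSq_add, hre, Quaternion.normSq_coe,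
      Quaternion.normSq_smul, Quaternion.normSq_eq_norm_mul_self i, hi.2, Complex.normSq_apply]
    ring
  exact (pow_left_inj₀ (norm_nonneg _) (norm_nonneg _) two_ne_zero).mp h

lemma sliceEmbedding_mem_qslice (z : ℂ) : sliceEmbedding hi z ∈ qslice i :=
  ⟨z.re, z.im, sliceEmbedding_apply hi z⟩

lemma exists_sliceEmbedding_eq_of_mem_qslice {w : ℍ} (hw : w ∈ qslice i) :
    ∃ z : ℂ, sliceEmbedding hi z = w := by
  obtain ⟨x, y, rfl⟩ := hw
  exact ⟨⟨x, y⟩, sliceEmbedding_apply hi _⟩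

lemma sliceEmbedding_mem_sliceDisc {z : ℂ} (hz : ‖z‖ < 1) :
    sliceEmbedding hi z ∈ sliceDisc i :=
  ⟨sliceEmbedding_mem_qslice hi z, by rwa [norm_sliceEmbedding]⟩

def sliceEmbeddingCLM : ℂ →L[ℝ] ℍ :=
  LinearMap.toContinuousLinearMap (sliceEmbedding hi).toLinearMap

lemma continuous_sliceEmbedding : Continuous (sliceEmbedding hi) :=
  (sliceEmbeddingCLM hi).continuous

lemma intervalIntegral_sliceEmbedding_mul {g : ℝ → ℂ} {a b : ℝ}
    (hg : IntervalIntegrable g volume a b) (q : ℍ) :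
    ∫ t in a..b, sliceEmbedding hi (g t) * q = sliceEmbedding hi (∫ t in a..b, g t) * q :=
  (((ContinuousLinearMap.mul ℝ ℍ).flip q).comp (sliceEmbeddingCLM hi)).intervalIntegral_comp_comm hg

end sliceEmbedding

lemma exists_sliceEmbedding_eq {i : ℍ} (hi : IsImaginaryUnit i) (q : ℍ) :
    ∃ (I : ℍ) (hI : IsImaginaryUnit I) (z : ℂ), sliceEmbedding hI z = q := by
  by_cases h : q.im = 0
  · refine ⟨i, hi, q.re, ?_⟩
    rw [sliceEmbedding_apply]
    simpa [h] using q.re_add_im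
  · have hn : ‖q.im‖ ≠ 0 := norm_ne_zero_iff.mpr h
    set I : ℍ := ‖q.im‖⁻¹ • q.im
    have hI : IsImaginaryUnit I :=
      ⟨by simp [I], by rw [norm_smul, norm_inv, norm_norm, inv_mul_cancel₀ hn]⟩
    refine ⟨I, hI, ⟨q.re, ‖q.im‖⟩, ?_⟩
    rw [sliceEmbedding_apply, smul_smul, mul_inv_cancel₀ hn, one_smul]
    exact q.re_add_im

section representation

variable {I i : ℍ} (hI : IsImaginaryUnit I) (hi : IsImaginaryUnit i)

lemma sliceEmbedding_eq_add_conj (w : ℂ) :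
    sliceEmbedding hI w = (2⁻¹ : ℝ) • (1 - I * i) * sliceEmbedding hi w
      + (2⁻¹ : ℝ) • (1 + I * i) * sliceEmbedding hi (conj w) := by
  simp only [sliceEmbedding_apply, Complex.conj_re, Complex.conj_im, neg_smul, smul_mul_assoc,
    sub_mul, add_mul, one_mul, mul_add, mul_smul_comm, mul_assoc, hi.mul_self, mul_neg, mul_one]
  module

lemma norm_half_smul_one_add_le {c : ℍ} (hc : ‖c‖ ≤ 1) : ‖(2⁻¹ : ℝ) • (1 + c)‖ ≤ 1 := by
  rw [norm_smul, Real.norm_of_nonneg (by norm_num)]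
  linarith [norm_add_le (1 : ℍ) c, norm_one (α := ℍ)]

lemma norm_le_of_hasSum_sliceEmbedding_pow_mul {b : ℕ → ℍ} {w : ℂ} {s s₁ s₂ : ℍ}
    (hs : HasSum (fun n => sliceEmbedding hI w ^ n * b n) s)
    (hs₁ : HasSum (fun n => sliceEmbedding hi w ^ n * b n) s₁)
    (hs₂ : HasSum (fun n => sliceEmbedding hi (conj w) ^ n * b n) s₂) :
    ‖s‖ ≤ ‖s₁‖ + ‖s₂‖ := by
  have hIi : ‖I * i‖ ≤ 1 := by rw [norm_mul, hI.2, hi.2, one_mul]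
  have hP : ‖(2⁻¹ : ℝ) • (1 - I * i)‖ ≤ 1 := by
    rw [sub_eq_add_neg]; exact norm_half_smul_one_add_le (by rwa [norm_neg])
  have hQ : ‖(2⁻¹ : ℝ) • (1 + I * i)‖ ≤ 1 := norm_half_smul_one_add_le hIi
  set P : ℍ := (2⁻¹ : ℝ) • (1 - I * i)
  set Q : ℍ := (2⁻¹ : ℝ) • (1 + I * i)
  have hpow (n : ℕ) : sliceEmbedding hI w ^ n * b n
      = P * (sliceEmbedding hi w ^ n * b n) + Q * (sliceEmbedding hi (conj w) ^ n * b n) := by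
    rw [← map_pow, sliceEmbedding_eq_add_conj hI hi, map_pow, map_pow, map_pow, add_mul,
      mul_assoc, mul_assoc]
  have hsum : HasSum (fun n => sliceEmbedding hI w ^ n * b n) (P * s₁ + Q * s₂) := by
    simpa only [hpow] using (hs₁.mul_left P).add (hs₂.mul_left Q)
  calc ‖s‖ = ‖P * s₁ + Q * s₂‖ := by rw [hs.unique hsum]
    _ ≤ ‖P‖ * ‖s₁‖ + ‖Q‖ * ‖s₂‖ := by
      rw [← norm_mul, ← norm_mul]; exact norm_add_le _ _
    _ ≤ ‖s₁‖ + ‖s₂‖ := by gcongr <;> nlinarith [norm_nonneg s₁, norm_nonneg s₂]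

end representation

lemma norm_le_two_mul_of_forall_mem_sliceDisc {i : ℍ} (hi : IsImaginaryUnit i) {g : ℍ → ℍ}
    {b : ℕ → ℍ} (hg : ∀ q ∈ unitBall, HasSum (fun n => q ^ n * b n) (g q)) {B : ℝ → ℝ}
    (hB : ∀ w ∈ sliceDisc i, ‖g w‖ ≤ B ‖w‖) {q : ℍ} (hq : q ∈ unitBall) :
    ‖g q‖ ≤ 2 * B ‖q‖ := by
  obtain ⟨I, hI, z, rfl⟩ := exists_sliceEmbedding_eq hi q
  have hz : ‖z‖ < 1 := by rwa [← norm_sliceEmbedding hI]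
  have hz' : ‖conj z‖ < 1 := by rwa [Complex.norm_conj]
  have hw := sliceEmbedding_mem_sliceDisc hi hz
  have hw' := sliceEmbedding_mem_sliceDisc hi hz'
  calc ‖g (sliceEmbedding hI z)‖
      ≤ ‖g (sliceEmbedding hi z)‖ + ‖g (sliceEmbedding hi (conj z))‖ :=
        norm_le_of_hasSum_sliceEmbedding_pow_mul hI hi (hg _ hq) (hg _ hw.2) (hg _ hw'.2)
    _ ≤ B ‖z‖ + B ‖z‖ := by
        gcongr
        · simpa [norm_sliceEmbedding] using hB _ hw
        · simpa [norm_sliceEmbedding] using hB _ hw'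
    _ = 2 * B ‖sliceEmbedding hI z‖ := by rw [norm_sliceEmbedding]; ring

lemma integral_exp_int_mul_mul_I (m : ℤ) :
    ∫ t in (0 : ℝ)..2 * π, exp (m * (t * I)) = if m = 0 then 2 * π else 0 := by
  split_ifs with hm
  · simp [hm]
  · have hmI : (m : ℂ) * I ≠ 0 := mul_ne_zero (by exact_mod_cast hm) I_ne_zero
    have hcomm (t : ℝ) : (m : ℂ) * (t * I) = m * I * t := by ring
    simp_rw [hcomm, integral_exp_mul_complex hmI]
    have hper : (m : ℂ) * I * ((2 * π : ℝ) : ℂ) = m * (2 * π * I) := by push_cast; ring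
    rw [hper, exp_int_mul_two_pi_mul_I]
    simp

lemma integral_exp_neg_mul_mul_add_pow_sub_pow (ζ : ℂ) (ρ : ℝ) (n : ℕ) :
    ∫ t in (0 : ℝ)..2 * π, exp (-(t * I)) * ((ζ + ρ * exp (t * I)) ^ n - ζ ^ n)
      = 2 * π * ρ * n * ζ ^ (n - 1) := by
  have hexpand (t : ℝ) : exp (-(t * I)) * ((ζ + ρ * exp (t * I)) ^ n - ζ ^ n)
      = ∑ k ∈ Finset.range (n + 1), (ρ ^ k * ζ ^ (n - k) * n.choose k) *
          exp (((k : ℤ) - 1 : ℤ) * (t * I)) - ζ ^ n * exp ((-1 : ℤ) * (t * I)) := by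
    rw [add_comm, add_pow, mul_sub, Finset.mul_sum]
    congr 1
    · refine Finset.sum_congr rfl fun k _ => ?_
      have hk : (((k : ℤ) - 1 : ℤ) : ℂ) * (t * I) = -(t * I) + k * (t * I) := by push_cast; ring
      rw [mul_pow, ← Complex.exp_nat_mul, hk, Complex.exp_add]
      ring
    · push_cast; rw [neg_one_mul, mul_comm]
  simp_rw [hexpand]
  rw [intervalIntegral.integral_sub (Continuous.intervalIntegrable (by fun_prop) _ _)
    (Continuous.intervalIntegrable (by fun_prop) _ _), intervalIntegral.integral_finsetSum
    (fun k _ => Continuous.intervalIntegrable (by fun_prop) _ _)]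
  simp_rw [intervalIntegral.integral_const_mul, integral_exp_int_mul_mul_I]
  rw [Finset.sum_eq_single 1]
  · simp only [pow_one, Nat.choose_one_right, Nat.cast_one, sub_self, ↓reduceIte, ofReal_mul,
      ofReal_ofNat, Int.reduceNeg, neg_eq_zero, one_ne_zero, ofReal_zero, mul_zero, sub_zero]
    ring
  · intro k _ hk
    simp [sub_eq_zero, hk]
  · intro h
    obtain rfl : n = 0 := by simpa using h
    simp

lemma norm_exp_neg_mul_mul_add_pow_sub_pow_le (ζ : ℂ) {ρ : ℝ} (hρ : 0 ≤ ρ) (t : ℝ) (n : ℕ) :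
    ‖exp (-(t * I)) * ((ζ + ρ * exp (t * I)) ^ n - ζ ^ n)‖ ≤ 2 * (‖ζ‖ + ρ) ^ n := by
  have hexp : ‖exp (-(t * I))‖ = 1 := by simpa using norm_exp_ofReal_mul_I (-t)
  have hc : ‖ζ + ρ * exp (t * I)‖ ≤ ‖ζ‖ + ρ :=
    (norm_add_le _ _).trans_eq (by simp [norm_exp_ofReal_mul_I, abs_of_nonneg hρ])
  have hζ : ‖ζ‖ ≤ ‖ζ‖ + ρ := le_add_of_nonneg_right hρ
  rw [norm_mul, hexp, one_mul, two_mul]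
  refine (norm_sub_le _ _).trans (add_le_add ?_ ?_) <;> rw [norm_pow] <;> gcongr

namespace SliceDeriv

variable {f f' : ℍ → ℍ} {a : ℕ → ℍ}

lemma hasSum_pow_mul (hf : SliceDeriv f f' a) {q : ℍ} (hq : q ∈ unitBall) :
    HasSum (fun n => q ^ n * (((n + 1 : ℕ) : ℝ) • a (n + 1))) (f' q) := by
  simpa only [mul_smul_comm] using hf.2 q hq

lemma hasSum_smul_pow_sub_one_mul (hf : SliceDeriv f f' a) {q : ℍ} (hq : q ∈ unitBall) :
    HasSum (fun n : ℕ => (n : ℝ) • (q ^ (n - 1) * a n)) (f' q) := by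
  rw [← hasSum_nat_add_iff' 1]
  simpa using hf.2 q hq

/-- Cauchy's formula for `f'` on a circle of the slice `ℂ(i)`, obtained by integrating the power
series termwise. -/
theorem integral_circle_sub_eq_smul (hf : SliceDeriv f f' a) {i : ℍ} (hi : IsImaginaryUnit i)
    {ζ : ℂ} {ρ : ℝ} (hρ : 0 ≤ ρ) (hζρ : ‖ζ‖ + ρ < 1) :
    ∫ t in (0 : ℝ)..2 * π, sliceEmbedding hi (exp (-(t * I))) *
        (f (sliceEmbedding hi (ζ + ρ * exp (t * I))) - f (sliceEmbedding hi ζ))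
      = (2 * π * ρ) • f' (sliceEmbedding hi ζ) := by
  set R := ‖ζ‖ + ρ
  have hball (z : ℂ) (hz : ‖z‖ ≤ R) : sliceEmbedding hi z ∈ unitBall := by
    show ‖_‖ < 1; rw [norm_sliceEmbedding]; linarith
  have hζ : sliceEmbedding hi ζ ∈ unitBall := hball ζ (le_add_of_nonneg_right hρ)
  set F : ℕ → ℝ → ℍ := fun n t =>
    sliceEmbedding hi (exp (-(t * I)) * ((ζ + ρ * exp (t * I)) ^ n - ζ ^ n)) * a n
  have hF_sum (t : ℝ) : HasSum (fun n => F n t) (sliceEmbedding hi (exp (-(t * I))) *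
      (f (sliceEmbedding hi (ζ + ρ * exp (t * I))) - f (sliceEmbedding hi ζ))) := by
    have hc : ‖ζ + ρ * exp (t * I)‖ ≤ R :=
      (norm_add_le _ _).trans_eq (by simp [norm_exp_ofReal_mul_I, abs_of_nonneg hρ, R])
    have h := ((hf.1.2 _ (hball _ hc)).sub (hf.1.2 _ hζ)).mul_left
      (sliceEmbedding hi (exp (-(t * I))))
    simpa only [F, map_mul, map_sub, map_pow, sub_mul, mul_assoc] using h
  have hF_le (n : ℕ) (t : ℝ) : ‖F n t‖ ≤ 2 * (‖a n‖ * R ^ n) := by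
    calc ‖F n t‖ ≤ 2 * R ^ n * ‖a n‖ := by
          rw [norm_mul, norm_sliceEmbedding]
          gcongr
          exact norm_exp_neg_mul_mul_add_pow_sub_pow_le ζ hρ t n
      _ = 2 * (‖a n‖ * R ^ n) := by ring
  have hterm (n : ℕ) : ∫ t in (0 : ℝ)..2 * π, F n t
      = (2 * π * ρ) • ((n : ℝ) • (sliceEmbedding hi ζ ^ (n - 1) * a n)) := by
    rw [intervalIntegral_sliceEmbedding_mul hi (Continuous.intervalIntegrable (by fun_prop) _ _),
      integral_exp_neg_mul_mul_add_pow_sub_pow, smul_smul, ← map_pow, ← smul_mul_assoc,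
      ← map_smul, Complex.real_smul]
    push_cast
    ring_nf
  have hsum := intervalIntegral.hasSum_integral_of_dominated_convergence (a := 0) (b := 2 * π)
    (μ := volume) (F := F) (fun n _ => 2 * (‖a n‖ * R ^ n))
    (fun n => ((continuous_sliceEmbedding hi).comp (by fun_prop)).mul continuous_const
      |>.aestronglyMeasurable)
    (fun n => Filter.Eventually.of_forall fun t _ => hF_le n t)
    (Filter.Eventually.of_forall fun _ _ => (hf.1.1 R (by positivity) hζρ).mul_left 2)
    intervalIntegrable_const (Filter.Eventually.of_forall fun t _ => hF_sum t)
  simp only [hterm] at hsum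
  exact hsum.unique ((hf.hasSum_smul_pow_sub_one_mul hζ).const_smul _)

theorem norm_le_div_of_norm_sub_le (hf : SliceDeriv f f' a) {i : ℍ} (hi : IsImaginaryUnit i)
    {w : ℍ} (hw : w ∈ qslice i) {ρ B : ℝ} (hρ : 0 < ρ) (hwρ : ‖w‖ + ρ < 1)
    (hB : ∀ x ∈ sliceDisc i, ‖x - w‖ = ρ → ‖f x - f w‖ ≤ B) :
    ‖f' w‖ ≤ B / ρ := by
  obtain ⟨ζ, rfl⟩ := exists_sliceEmbedding_eq_of_mem_qslice hi hw
  rw [norm_sliceEmbedding] at hwρ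
  have hbound (t : ℝ) : ‖sliceEmbedding hi (exp (-(t * I))) *
      (f (sliceEmbedding hi (ζ + ρ * exp (t * I))) - f (sliceEmbedding hi ζ))‖ ≤ B := by
    set u : ℂ := ρ * exp (t * I)
    have hu : ‖u‖ = ρ := by simp [u, norm_exp_ofReal_mul_I, hρ.le]
    have hx : ‖sliceEmbedding hi (ζ + u)‖ < 1 := by
      rw [norm_sliceEmbedding]; linarith [norm_add_le ζ u]
    have hdist : ‖sliceEmbedding hi (ζ + u) - sliceEmbedding hi ζ‖ = ρ := by
      rw [← map_sub, add_sub_cancel_left, norm_sliceEmbedding, hu]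
    rw [norm_mul, norm_sliceEmbedding, show ‖exp (-(t * I))‖ = 1 by
      simpa using norm_exp_ofReal_mul_I (-t), one_mul]
    exact hB _ ⟨sliceEmbedding_mem_qslice hi _, hx⟩ hdist
  have h := intervalIntegral.norm_integral_le_of_norm_le_const (a := 0) (b := 2 * π)
    fun t _ => hbound t
  rw [hf.integral_circle_sub_eq_smul hi hρ.le hwρ, norm_smul,
    Real.norm_of_nonneg (by positivity), sub_zero, abs_of_pos (by positivity)] at h
  rw [le_div_iff₀ hρ]
  nlinarith [pi_pos]

end SliceDeriv

lemma comp1_add_comp2_mul {i j : ℍ} (hj : j ≠ 0) (f : ℍ → ℍ) (q : ℍ) :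
    comp1 i f q + comp2 i j f q * j = f q := by
  simp only [comp1, comp2, inv_mul_cancel_right₀ hj]
  module

lemma norm_sub_le_norm_comp1_sub_add_norm_comp2_sub {i j : ℍ} (hj : ‖j‖ = 1) (f : ℍ → ℍ)
    (x y : ℍ) :
    ‖f x - f y‖ ≤ ‖comp1 i f x - comp1 i f y‖ + ‖comp2 i j f x - comp2 i j f y‖ := by
  have hj0 : j ≠ 0 := by rintro rfl; simp at hj
  rw [← comp1_add_comp2_mul hj0 f x, ← comp1_add_comp2_mul hj0 f y, add_sub_add_comm,
    ← sub_mul]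
  refine (norm_add_le _ _).trans_eq ?_
  rw [norm_mul, hj, mul_one]

lemma IsMajorant.mul_le_abs_mul {ω : ℝ → ℝ} (hω : IsMajorant ω) (C : ℝ) {s t : ℝ} (hs : 0 ≤ s)
    (hst : s ≤ t) (ht : t ≤ 2) : C * ω s ≤ |C| * ω t := by
  have hsI : s ∈ Set.Icc (0 : ℝ) 2 := ⟨hs, hst.trans ht⟩
  have htI : t ∈ Set.Icc (0 : ℝ) 2 := ⟨hs.trans hst, ht⟩
  calc C * ω s ≤ |C| * ω s := mul_le_mul_of_nonneg_right (le_abs_self C) (hω.nonneg s hsI)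
    _ ≤ |C| * ω t := mul_le_mul_of_nonneg_left (hω.mono hsI htI hst) (abs_nonneg C)

lemma two_mul_div_half_le_of_isMajorant {ω₁ ω₂ : ℝ → ℝ} (hω₁ : IsMajorant ω₁)
    (hω₂ : IsMajorant ω₂) (C₁ C₂ : ℝ) {d : ℝ} (hd : 0 < d) (hd2 : d ≤ 2) :
    2 * ((C₁ * ω₁ (d / 2) + C₂ * ω₂ (d / 2)) / (d / 2))
      ≤ 4 * (|C₁| + |C₂| + 1) * (ω₁ d + ω₂ d) / d := by
  have hω₁d := hω₁.nonneg d ⟨hd.le, hd2⟩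
  have hω₂d := hω₂.nonneg d ⟨hd.le, hd2⟩
  calc 2 * ((C₁ * ω₁ (d / 2) + C₂ * ω₂ (d / 2)) / (d / 2))
      = 4 * (C₁ * ω₁ (d / 2) + C₂ * ω₂ (d / 2)) / d := by field_simp; ring
    _ ≤ 4 * (|C₁| * ω₁ d + |C₂| * ω₂ d) / d := by
        gcongr 4 * ?_ / d
        exact add_le_add (hω₁.mul_le_abs_mul C₁ (by positivity) (half_le_self hd.le) hd2)
          (hω₂.mul_le_abs_mul C₂ (by positivity) (half_le_self hd.le) hd2)
    _ ≤ 4 * (|C₁| + |C₂| + 1) * (ω₁ d + ω₂ d) / d := by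
        rw [mul_assoc]
        gcongr
        nlinarith [abs_nonneg C₁, abs_nonneg C₂]

theorem stmt14 (ω₁ ω₂ : ℝ → ℝ) (hω₁ : IsRegularMajorant ω₁) (hω₂ : IsRegularMajorant ω₂)
    (i j : ℍ) (hij : OrthogonalUnits i j)
    (f f' : ℍ → ℍ) (a : ℕ → ℍ) (hf : SliceDeriv f f' a)
    (C₁ C₂ : ℝ)
    (h1 : ∀ x ∈ sliceDisc i, ∀ y ∈ sliceDisc i,
      ‖comp1 i f x - comp1 i f y‖ ≤ C₁ * ω₁ ‖x - y‖)
    (h2 : ∀ x ∈ sliceDisc i, ∀ y ∈ sliceDisc i,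
      ‖comp2 i j f x - comp2 i j f y‖ ≤ C₂ * ω₂ ‖x - y‖) :
    ∃ C > 0, ∀ q ∈ unitBall,
      ‖f' q‖ ≤ C * (ω₁ (1 - ‖q‖) + ω₂ (1 - ‖q‖)) / (1 - ‖q‖) := by
  obtain ⟨hi, hj, -⟩ := hij
  set B : ℝ → ℝ := fun r =>
    (C₁ * ω₁ ((1 - r) / 2) + C₂ * ω₂ ((1 - r) / 2)) / ((1 - r) / 2)
  have hslice (w : ℍ) (hw : w ∈ sliceDisc i) : ‖f' w‖ ≤ B ‖w‖ :=
    hf.norm_le_div_of_norm_sub_le hi hw.1 (by linarith [hw.2]) (by linarith [hw.2])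
      fun x hx hxw => hxw ▸ (norm_sub_le_norm_comp1_sub_add_norm_comp2_sub hj.2 f x w).trans
        (add_le_add (h1 x hx w hw) (h2 x hx w hw))
  refine ⟨4 * (|C₁| + |C₂| + 1), by positivity, fun q hq => ?_⟩
  calc ‖f' q‖ ≤ 2 * B ‖q‖ :=
        norm_le_two_mul_of_forall_mem_sliceDisc hi (fun q hq => hf.hasSum_pow_mul hq) hslice hq
    _ ≤ 4 * (|C₁| + |C₂| + 1) * (ω₁ (1 - ‖q‖) + ω₂ (1 - ‖q‖)) / (1 - ‖q‖) :=
        two_mul_div_half_le_of_isMajorant hω₁.1 hω₂.1 C₁ C₂ (sub_pos.mpr hq)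
          (by linarith [norm_nonneg q])
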